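/- arXiv:1911.00272 — 2 statements merged into one kernel-verified Lean document; each statement's English description precedes it below -/
import Mathlib

section
/- Strict information monotonicity of DMI: if X' is conditionally independent of Y given X, det(U_{X,Y}) ≠ 0, and the transition matrix U_{X'|X} is not a permutation matrix, then DMI(X';Y) < DMI(X;Y). -/
/-!
Conditional independence of `X'` and `Y` given `X` factors the joint matrix as
`U_{X',Y} = U_{X'|X}ᵀ U_{X,Y}`, so `DMI(X';Y) = |det U_{X'|X}| · DMI(X;Y)`, and it remains to
show `|det T| < 1` for a row-stochastic `T` that is not a permutation matrix. Expanding
`1 = ∏ i, ∑ j, T i j` as a sum over all maps `f : n → n` bounds `|det T|` by the part of that sum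
indexed by permutations. If `det T ≠ 0`, some permutation `σ` has all `T i (σ i) > 0`; as
`T ≠ P_σ`, some row `i₀` has another positive entry `b`, and the non-injective map
`σ[i₀ ↦ b]` contributes a positive term that the permutations miss.
-/

open MeasureTheory

/-- The joint distribution matrix of two random variables valued in `Fin C`. -/
noncomputable def jointMatrix {Ω : Type*} [MeasurableSpace Ω] (μ : Measure Ω) {C : ℕ}
    (X Y : Ω → Fin C) : Matrix (Fin C) (Fin C) ℝ :=
  Matrix.of fun x y => (μ {ω | X ω = x ∧ Y ω = y}).toReal

/-- Determinant based mutual information: `DMI(X;Y) = |det U_{X,Y}|`. -/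
noncomputable def DMI {Ω : Type*} [MeasurableSpace Ω] (μ : Measure Ω) {C : ℕ}
    (X Y : Ω → Fin C) : ℝ :=
  |(jointMatrix μ X Y).det|

/-- The transition matrix `U_{X'|X}`: entry `(x, x')` is `P[X' = x' | X = x]`. -/
noncomputable def transMatrix {Ω : Type*} [MeasurableSpace Ω] (μ : Measure Ω) {C : ℕ}
    (X X' : Ω → Fin C) : Matrix (Fin C) (Fin C) ℝ :=
  Matrix.of fun x x' => (μ {ω | X' ω = x' ∧ X ω = x}).toReal / (μ {ω | X ω = x}).toReal

/-- A permutation matrix. -/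
def IsPermMatrix {C : ℕ} (T : Matrix (Fin C) (Fin C) ℝ) : Prop :=
  ∃ π : Equiv.Perm (Fin C), ∀ i j, T i j = if π i = j then 1 else 0

namespace Matrix

open Equiv Finset

variable {n : Type*} [Fintype n] [DecidableEq n] {M : Matrix n n ℝ}

theorem abs_det_le_sum_prod_perm_of_nonneg (h0 : ∀ i j, 0 ≤ M i j) :
    |M.det| ≤ ∑ σ : Perm n, ∏ i, M i (σ i) := by
  rw [← det_transpose, det_apply']
  refine (abs_sum_le_sum_abs _ _).trans (sum_le_sum fun σ _ => ?_)
  simp only [transpose_apply, abs_mul, abs_of_nonneg (prod_nonneg fun i _ => h0 i (σ i))]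
  rcases Int.units_eq_one_or (Perm.sign σ) with h | h <;> simp [h]

theorem exists_prod_perm_ne_zero_of_det_ne_zero (hM : M.det ≠ 0) :
    ∃ σ : Perm n, ∏ i, M i (σ i) ≠ 0 := by
  rw [← det_transpose, det_apply'] at hM
  obtain ⟨σ, -, hσ⟩ := exists_ne_zero_of_sum_ne_zero hM
  exact ⟨σ, right_ne_zero_of_mul hσ⟩

theorem sum_prod_perm_lt_one_of_mem_rowStochastic (hM : M ∈ rowStochastic ℝ n)
    {f : n → n} (hf : ¬ f.Injective) (hpos : 0 < ∏ i, M i (f i)) :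
    ∑ σ : Perm n, ∏ i, M i (σ i) < 1 := by
  have hall : ∑ g : n → n, ∏ i, M i (g i) = 1 := by
    rw [← Fintype.prod_sum (fun i j => M i j)]
    simp [sum_row_of_mem_rowStochastic hM]
  let perms : Finset (n → n) := univ.map ⟨fun σ : Perm n => ⇑σ, DFunLike.coe_injective⟩
  have hf_perms : f ∉ perms := by
    simp only [perms, mem_map, mem_univ, true_and, Function.Embedding.coeFn_mk, not_exists]
    rintro σ rfl
    exact hf σ.injective
  calc ∑ σ : Perm n, ∏ i, M i (σ i)
      = ∑ g ∈ perms, ∏ i, M i (g i) := by rw [sum_map]; rfl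
    _ < ∑ g : n → n, ∏ i, M i (g i) :=
      sum_lt_sum_of_subset (subset_univ _) (mem_univ f) hf_perms hpos
        fun g _ _ => prod_nonneg fun i _ => nonneg_of_mem_rowStochastic hM
    _ = 1 := hall

theorem eq_permMatrix_of_mem_rowStochastic (hM : M ∈ rowStochastic ℝ n) {σ : Perm n}
    (h : ∀ i j, j ≠ σ i → M i j = 0) : M = σ.permMatrix ℝ := by
  ext i j
  simp only [Perm.permMatrix, PEquiv.toMatrix_apply, toPEquiv_apply, Option.mem_def,
    Option.some_inj]
  split_ifs with hj
  · subst hj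
    rw [← sum_row_of_mem_rowStochastic hM i, sum_eq_single (σ i) (fun j _ hj => h i j hj)]
    simp
  · exact h i j (Ne.symm hj)

theorem abs_det_lt_one_of_mem_rowStochastic (hM : M ∈ rowStochastic ℝ n)
    (hperm : ∀ σ : Perm n, M ≠ σ.permMatrix ℝ) : |M.det| < 1 := by
  by_cases hdet : M.det = 0
  · simp [hdet]
  obtain ⟨σ, hσ⟩ := exists_prod_perm_ne_zero_of_det_ne_zero hdet
  have hσpos : ∀ i, 0 < M i (σ i) := fun i =>
    (nonneg_of_mem_rowStochastic hM).lt_of_ne' (prod_ne_zero_iff.1 hσ i (mem_univ i))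
  obtain ⟨i₀, b, hb, hbpos⟩ : ∃ i b, b ≠ σ i ∧ 0 < M i b := by
    by_contra! h
    exact hperm σ (eq_permMatrix_of_mem_rowStochastic hM
      fun i j hj => (h i j hj).antisymm (nonneg_of_mem_rowStochastic hM))
  let f := Function.update σ i₀ b
  have hf : ¬ f.Injective := by
    have hne : σ.symm b ≠ i₀ := fun h => hb (by rw [← h, apply_symm_apply])
    intro hinj
    refine hne (hinj ?_)
    simp [f, hne]
  have hfpos : 0 < ∏ i, M i (f i) := prod_pos fun i _ => by
    by_cases hi : i = i₀
    · subst hi; simpa [f] using hbpos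
    · simpa [f, hi] using hσpos i
  calc |M.det| ≤ ∑ τ : Perm n, ∏ i, M i (τ i) := abs_det_le_sum_prod_perm_of_nonneg
        fun _ _ => nonneg_of_mem_rowStochastic hM
    _ < 1 := sum_prod_perm_lt_one_of_mem_rowStochastic hM hf hfpos

end Matrix

theorem isPermMatrix_permMatrix {C : ℕ} (σ : Equiv.Perm (Fin C)) :
    IsPermMatrix (σ.permMatrix ℝ) :=
  ⟨σ, fun i j => by simp [Equiv.toPEquiv_apply, eq_comm]⟩

theorem MeasureTheory.sum_measure_preimage_singleton_inter {α β : Type*} [MeasurableSpace α]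
    [Fintype β] [MeasurableSpace β] [MeasurableSingletonClass β] (μ : Measure α) {Z : α → β}
    (hZ : Measurable Z) (s : Set α) : ∑ z, μ (Z ⁻¹' {z} ∩ s) = μ s := by
  -- the fibres of `Z` are measurable, so additivity holds for `μ.restrict s` even if `s` is not
  have := sum_measure_preimage_singleton (μ := μ.restrict s) Finset.univ
    fun z _ => hZ (measurableSet_singleton z)
  simpa [Measure.restrict_apply (hZ (measurableSet_singleton _))] using this

section DMI

open Matrix

variable {Ω : Type*} [MeasurableSpace Ω] {μ : Measure Ω} {C : ℕ} {X X' Y : Ω → Fin C}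

theorem measure_preimage_ne_zero_of_det_jointMatrix_ne_zero
    (hdet : (jointMatrix μ X Y).det ≠ 0) (x : Fin C) : μ {ω | X ω = x} ≠ 0 := by
  intro hx
  refine hdet (det_eq_zero_of_row_eq_zero x fun y => ?_)
  have hxy : μ {ω | X ω = x ∧ Y ω = y} = 0 := measure_mono_null (fun _ h => h.1) hx
  simp [jointMatrix, hxy]

theorem transMatrix_mem_rowStochastic [IsFiniteMeasure μ] (hX' : Measurable X')
    (hX : ∀ x, μ {ω | X ω = x} ≠ 0) : transMatrix μ X X' ∈ rowStochastic ℝ (Fin C) := by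
  refine mem_rowStochastic_iff_sum.2
    ⟨fun _ _ => div_nonneg ENNReal.toReal_nonneg ENNReal.toReal_nonneg, fun x => ?_⟩
  have hsum : ∑ x', (μ {ω | X' ω = x' ∧ X ω = x}).toReal = (μ {ω | X ω = x}).toReal := by
    rw [← sum_measure_preimage_singleton_inter μ hX' {ω | X ω = x},
      ENNReal.toReal_sum fun _ _ => measure_ne_top μ _]
    rfl
  simp only [transMatrix, of_apply, ← Finset.sum_div, hsum]
  exact div_self (ENNReal.toReal_ne_zero.2 ⟨hX x, measure_ne_top μ _⟩)

theorem jointMatrix_eq_transpose_transMatrix_mul [IsFiniteMeasure μ] (hX : Measurable X)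
    (hci : ∀ x x' y,
      μ {ω | X ω = x} * μ {ω | X' ω = x' ∧ Y ω = y ∧ X ω = x} =
        μ {ω | X' ω = x' ∧ X ω = x} * μ {ω | Y ω = y ∧ X ω = x}) :
    jointMatrix μ X' Y = (transMatrix μ X X')ᵀ * jointMatrix μ X Y := by
  ext x' y
  simp only [mul_apply, transpose_apply, jointMatrix, transMatrix, of_apply]
  rw [← sum_measure_preimage_singleton_inter μ hX,
    ENNReal.toReal_sum fun _ _ => measure_ne_top μ _]
  refine Finset.sum_congr rfl fun x _ => ?_
  have hset :
      X ⁻¹' {x} ∩ {ω | X' ω = x' ∧ Y ω = y} = {ω | X' ω = x' ∧ Y ω = y ∧ X ω = x} := by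
    ext ω
    simp only [Set.mem_inter_iff, Set.mem_preimage, Set.mem_singleton_iff, Set.mem_ofPred_eq]
    tauto
  have hswap : {ω | X ω = x ∧ Y ω = y} = {ω | Y ω = y ∧ X ω = x} := Set.ext fun _ => and_comm
  have hci := congrArg ENNReal.toReal (hci x x' y)
  rw [ENNReal.toReal_mul, ENNReal.toReal_mul] at hci
  rw [hset, hswap]
  by_cases hx : (μ {ω | X ω = x}).toReal = 0
  · -- an `X`-null fibre contributes `0` on both sides (junk value `a / 0 = 0` on the right)
    rw [hx, div_zero, zero_mul]
    refine le_antisymm ?_ ENNReal.toReal_nonneg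
    exact hx ▸ ENNReal.toReal_mono (measure_ne_top μ _) (measure_mono fun ω h => h.2.2)
  · rw [div_mul_eq_mul_div, eq_div_iff hx]
    linarith

end DMI

theorem DMI_strict_information_monotone_general {Ω : Type*} [MeasurableSpace Ω] (μ : Measure Ω)
    [IsProbabilityMeasure μ] {C : ℕ} (X X' Y : Ω → Fin C)
    (hX : Measurable X) (hX' : Measurable X')
    (hci : ∀ x x' y,
      μ {ω | X ω = x} * μ {ω | X' ω = x' ∧ Y ω = y ∧ X ω = x} =
        μ {ω | X' ω = x' ∧ X ω = x} * μ {ω | Y ω = y ∧ X ω = x})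
    (hdet : (jointMatrix μ X Y).det ≠ 0)
    (hnp : ¬ IsPermMatrix (transMatrix μ X X')) :
    DMI μ X' Y < DMI μ X Y := by
  have hXpos := measure_preimage_ne_zero_of_det_jointMatrix_ne_zero hdet
  have hT : |(transMatrix μ X X').det| < 1 :=
    Matrix.abs_det_lt_one_of_mem_rowStochastic (transMatrix_mem_rowStochastic hX' hXpos)
      fun σ hσ => hnp (hσ ▸ isPermMatrix_permMatrix σ)
  rw [DMI, DMI, jointMatrix_eq_transpose_transMatrix_mul hX hci, Matrix.det_mul,
    Matrix.det_transpose, abs_mul]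
  exact mul_lt_of_lt_one_left (abs_pos.2 hdet) hT

/-- strict information monotonicity of DMI: if `X'` is conditionally
independent of `Y` given `X`, `det U_{X,Y} ≠ 0`, and the transition matrix `U_{X'|X}` is
not a permutation matrix, then `DMI(X';Y) < DMI(X;Y)`. -/
theorem DMI_strict_information_monotone {Ω : Type*} [MeasurableSpace Ω] (μ : Measure Ω)
    [IsProbabilityMeasure μ] {C : ℕ} (X X' Y : Ω → Fin C)
    (hX : Measurable X) (hX' : Measurable X') (hY : Measurable Y)
    (hci : ∀ x x' y,
      μ {ω | X ω = x} * μ {ω | X' ω = x' ∧ Y ω = y ∧ X ω = x} =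
        μ {ω | X' ω = x' ∧ X ω = x} * μ {ω | Y ω = y ∧ X ω = x})
    (hdet : (jointMatrix μ X Y).det ≠ 0)
    (hnp : ¬ IsPermMatrix (transMatrix μ X X')) :
    DMI μ X' Y < DMI μ X Y :=
  DMI_strict_information_monotone_general μ X X' Y hX hX' hci hdet hnp
end

section
/- Variance bound for the count-matrix determinant: with M(c,c') = Σ_{t∈T_1} I_t(c,c') as in the DMI-Mechanism (|T_1| = m ≥ C, i.i.d. tasks with joint distribution matrix U), Var[det(M)] ≤ f(m,C)·per(U) + C!·f(m,C)·(f(m,C) − f(m−C,C))·per(U), where f(m,C) = binom(m,C)·C! and per(U) is the permanent of U. -/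
/-!
Expanding the determinant along permutations and expanding each product of row sums,
`det M = Σ_{π, t} sgn π · I_t(π)`, where `t` runs over the injective maps from signals to tasks
and `I_t(π)` is the indicator that task `t c` has report pair `(π c, c)` for every `c`
(non-injective `t` contribute zero, since one task cannot carry two pairs).
The variance of this signed sum is the double sum of covariances. Indicators on disjoint task
tuples are independent, so only overlapping pairs `(t, t')` (diagonal pairs included)
contribute, and for `[0,1]`-valued variables `|Cov(I, I')| ≤ E I`. For a fixed `t` at most
`f(m,C) − f(m−C,C)` tuples `t'` overlap it, each with `C!` permutations, and
`Σ_{π,t} E I_t(π) = f(m,C) · per(U)` because the tasks are i.i.d.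
-/

open MeasureTheory ProbabilityTheory

/-- The permanent of a square real matrix. -/
def permanent {C : ℕ} (U : Matrix (Fin C) (Fin C) ℝ) : ℝ :=
  ∑ π : Equiv.Perm (Fin C), ∏ c, U c (π c)

/-- `f(m,C) = binom(m,C) · C!`, the number of ordered `C`-tuples of distinct tasks
among `m` tasks, as a real number. -/
def fOrd (m C : ℕ) : ℝ := ((m.choose C * Nat.factorial C : ℕ) : ℝ)

open Finset

section UnitIntervalValued

variable {Ω : Type*} [MeasurableSpace Ω] {μ : Measure Ω} [IsProbabilityMeasure μ]

lemma memLp_two_of_mem_Icc {Z : Ω → ℝ} (hZ : AEStronglyMeasurable Z μ)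
    (hZ01 : ∀ ω, Z ω ∈ Set.Icc 0 1) : MemLp Z 2 μ :=
  MemLp.of_bound hZ 1 (Filter.Eventually.of_forall fun ω =>
    abs_le.2 ⟨by linarith [(hZ01 ω).1], (hZ01 ω).2⟩)

lemma abs_covariance_le_integral {X Y : Ω → ℝ} (hX : AEStronglyMeasurable X μ)
    (hY : AEStronglyMeasurable Y μ) (hX01 : ∀ ω, X ω ∈ Set.Icc 0 1)
    (hY01 : ∀ ω, Y ω ∈ Set.Icc 0 1) :
    |cov[X, Y; μ]| ≤ μ[X] := by
  have hXL := memLp_two_of_mem_Icc hX hX01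
  have hYL := memLp_two_of_mem_Icc hY hY01
  have hXY_le : μ[X * Y] ≤ μ[X] :=
    integral_mono (hXL.integrable_mul hYL) (hXL.integrable one_le_two)
      fun ω => mul_le_of_le_one_right (hX01 ω).1 (hY01 ω).2
  have hXY_nonneg : 0 ≤ μ[X * Y] := integral_nonneg fun ω => mul_nonneg (hX01 ω).1 (hY01 ω).1
  have hX_nonneg : 0 ≤ μ[X] := integral_nonneg fun ω => (hX01 ω).1
  have hY_nonneg : 0 ≤ μ[Y] := integral_nonneg fun ω => (hY01 ω).1
  have hY_le : μ[Y] ≤ 1 := by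
    simpa using integral_mono (hYL.integrable one_le_two) (integrable_const 1) fun ω => (hY01 ω).2
  rw [covariance_eq_sub hXL hYL, abs_le]
  constructor <;> nlinarith

lemma variance_sum_le_of_covariance_eq_zero {ι : Type*} [Fintype ι] {X : ι → Ω → ℝ}
    {a : ι → ℝ} (hX : ∀ i, AEStronglyMeasurable (X i) μ) (hX01 : ∀ i ω, X i ω ∈ Set.Icc 0 1)
    (ha : ∀ i, |a i| ≤ 1) (R : ι → ι → Prop) [DecidableRel R]
    (hR : ∀ i j, ¬ R i j → cov[X i, X j; μ] = 0) :
    Var[fun ω => ∑ i, a i * X i ω; μ] ≤ ∑ i, (#{j | R i j} : ℝ) * μ[X i] := by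
  rw [variance_fun_sum fun i => (memLp_two_of_mem_Icc (hX i) (hX01 i)).const_mul (a i)]
  refine sum_le_sum fun i _ => ?_
  rw [card_filter, Nat.cast_sum, sum_mul]
  refine sum_le_sum fun j _ => ?_
  rw [covariance_const_mul_left, covariance_const_mul_right]
  by_cases hij : R i j
  · have hcov := abs_covariance_le_integral (hX i) (hX j) (hX01 i) (hX01 j)
    have haij : |a i * a j| ≤ 1 := by
      rw [abs_mul]; exact mul_le_one₀ (ha i) (abs_nonneg _) (ha j)
    simp only [hij, if_true, Nat.cast_one, one_mul]
    calc a i * (a j * cov[X i, X j; μ]) ≤ |a i * a j| * |cov[X i, X j; μ]| := by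
          rw [← mul_assoc, ← abs_mul]; exact le_abs_self _
      _ ≤ μ[X i] := by nlinarith [abs_nonneg (a i * a j), abs_nonneg cov[X i, X j; μ]]
  · simp [hij, hR i j hij]

end UnitIntervalValued

section ProductSpace

variable {ι α : Type*} [Fintype ι] [MeasurableSpace α] {ν : Measure α} [IsProbabilityMeasure ν]

lemma iIndepFun_eval_pi : iIndepFun (fun i (ω : ι → α) => ω i) (Measure.pi fun _ => ν) :=
  iIndepFun_pi (X := fun _ => id) fun _ => aemeasurable_id

lemma indepFun_comp_restrict_pi {β γ : Type*} [MeasurableSpace β] [MeasurableSpace γ]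
    {S T : Finset ι} (hST : Disjoint S T) {F : (S → α) → β} {G : (T → α) → γ}
    (hF : Measurable F) (hG : Measurable G) :
    IndepFun (F ∘ S.restrict) (G ∘ T.restrict) (Measure.pi fun _ : ι => ν) :=
  (iIndepFun_eval_pi.indepFun_finset S T hST measurable_pi_apply).comp hF hG

variable [DecidableEq α] [MeasurableSingletonClass α]

lemma measurable_ite_eq (x : α) : Measurable fun y => if y = x then (1 : ℝ) else 0 :=
  measurable_const.ite (measurableSet_singleton x) measurable_const

lemma integral_prod_ite_eval_pi {κ : Type*} [Fintype κ] {t : κ → ι} (ht : t.Injective)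
    (x : κ → α) :
    ∫ ω, ∏ k, (if ω (t k) = x k then (1 : ℝ) else 0) ∂(Measure.pi fun _ : ι => ν)
      = ∏ k, ν.real {x k} := by
  rw [(iIndepFun_eval_pi.precomp ht).integral_fun_prod_comp
    (f := fun k y => if y = x k then (1 : ℝ) else 0)
    (fun _ => (measurable_pi_apply _).aemeasurable)
    fun k => (measurable_ite_eq (x k)).aestronglyMeasurable]
  refine prod_congr rfl fun k _ => ?_
  refine (integral_comp_eval (μ := fun _ : ι => ν) (i := t k)
    (measurable_ite_eq (x k)).aestronglyMeasurable).trans ?_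
  simpa [Set.indicator_apply] using integral_indicator_one (μ := ν) (measurableSet_singleton (x k))

end ProductSpace

section Embeddings

variable {κ ι : Type*} [Fintype κ] [Fintype ι]

lemma sum_embedding_eq_sum [DecidableEq κ] {M : Type*} [AddCommMonoid M] (g : (κ → ι) → M)
    (hg : ∀ t, ¬ t.Injective → g t = 0) : ∑ t : κ ↪ ι, g t = ∑ t, g t :=
  (sum_map univ ⟨_, DFunLike.coe_injective⟩ g).symm.trans <|
    sum_subset (subset_univ _) fun t _ ht =>
      hg t fun hinj => ht (mem_map.2 ⟨⟨t, hinj⟩, mem_univ _, rfl⟩)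

lemma card_overlapping_embeddings_add_le [DecidableEq ι] (t : κ ↪ ι) :
    #{t' : κ ↪ ι | ¬ Disjoint (univ.map t) (univ.map t')}
      + (Fintype.card ι - Fintype.card κ).descFactorial (Fintype.card κ)
      ≤ (Fintype.card ι).descFactorial (Fintype.card κ) := by
  have hcompl : Fintype.card {x // x ∉ univ.map t} = Fintype.card ι - Fintype.card κ := by
    rw [Fintype.card_subtype_compl, Fintype.card_coe, card_map, card_univ]
  have hdisjoint : Fintype.card (κ ↪ {x // x ∉ univ.map t})
      ≤ #{t' : κ ↪ ι | Disjoint (univ.map t) (univ.map t')} := by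
    refine card_le_card_of_injOn (fun f => f.trans (Function.Embedding.subtype _)) ?_ ?_
    · intro f _
      simp only [coe_filter, mem_univ, true_and, disjoint_right, mem_map]
      rintro _ ⟨k, rfl⟩
      simpa using (f k).2
    · exact fun f _ g _ hfg =>
        Function.Embedding.ext fun k => Subtype.ext (DFunLike.congr_fun hfg k)
  rw [Fintype.card_embedding_eq, hcompl] at hdisjoint
  have hsplit := card_filter_add_card_filter_not (s := univ)
    (fun t' : κ ↪ ι => Disjoint (univ.map t) (univ.map t'))
  rw [card_univ, Fintype.card_embedding_eq] at hsplit
  omega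

end Embeddings

section CountMatrix

variable {C m : ℕ}

def countMatrix (ω : Fin m → Fin C × Fin C) : Matrix (Fin C) (Fin C) ℝ :=
  Matrix.of fun c c' => ∑ t : Fin m, if ω t = (c, c') then 1 else 0

/-- The paper's `I_t(π)`. Mathlib's `det M = Σ_σ sgn σ ∏_c M (σ c) c` reads the permutation
along columns, hence the pair `(p c, c)`. -/
def tupleIndicator (p : Equiv.Perm (Fin C)) (t : Fin C → Fin m) (ω : Fin m → Fin C × Fin C) :
    ℝ :=
  ∏ c, if ω (t c) = (p c, c) then 1 else 0

lemma tupleIndicator_eq_ite (p : Equiv.Perm (Fin C)) (t : Fin C → Fin m)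
    (ω : Fin m → Fin C × Fin C) :
    tupleIndicator p t ω = if ∀ c, ω (t c) = (p c, c) then 1 else 0 := by
  rw [tupleIndicator, Fintype.prod_boole]; congr

lemma tupleIndicator_mem_Icc (p : Equiv.Perm (Fin C)) (t : Fin C → Fin m)
    (ω : Fin m → Fin C × Fin C) : tupleIndicator p t ω ∈ Set.Icc 0 1 := by
  rw [tupleIndicator_eq_ite]; split_ifs <;> simp

lemma tupleIndicator_eq_zero_of_not_injective (p : Equiv.Perm (Fin C)) {t : Fin C → Fin m}
    (ht : ¬ t.Injective) (ω : Fin m → Fin C × Fin C) : tupleIndicator p t ω = 0 := by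
  rw [tupleIndicator_eq_ite, if_neg]
  refine fun h => ht fun c c' hcc' => ?_
  have hpair : (p c, c) = (p c', c') := by rw [← h c, ← h c', hcc']
  exact (Prod.mk.inj hpair).2

lemma det_countMatrix (ω : Fin m → Fin C × Fin C) :
    (countMatrix ω).det = ∑ i : Equiv.Perm (Fin C) × (Fin C ↪ Fin m),
      ((Equiv.Perm.sign i.1 : ℤ) : ℝ) * tupleIndicator i.1 i.2 ω := by
  rw [Matrix.det_apply, Fintype.sum_prod_type]
  refine sum_congr rfl fun p _ => ?_
  dsimp only
  rw [Units.smul_def, zsmul_eq_mul, ← mul_sum, sum_embedding_eq_sum _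
    fun t ht => tupleIndicator_eq_zero_of_not_injective p ht ω]
  congr 1
  simp only [countMatrix, Matrix.of_apply, tupleIndicator, prod_univ_sum, Fintype.piFinset_univ]

lemma permanent_eq_matrix_permanent (U : Matrix (Fin C) (Fin C) ℝ) :
    permanent U = U.permanent :=
  Matrix.permanent_transpose U

lemma fOrd_eq_descFactorial (m C : ℕ) : fOrd m C = m.descFactorial C := by
  rw [fOrd, Nat.descFactorial_eq_factorial_mul_choose, mul_comm]

lemma card_overlapping_pairs_le (t : Fin C ↪ Fin m) :
    (#{j : Equiv.Perm (Fin C) × (Fin C ↪ Fin m) | ¬ Disjoint (univ.map t) (univ.map j.2)} : ℝ)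
      ≤ C.factorial * (fOrd m C - fOrd (m - C) C) := by
  have h := card_overlapping_embeddings_add_le t
  simp only [Fintype.card_fin] at h
  rw [← univ_product_univ, filter_product_right (s := univ) (t := univ)
    (fun t' : Fin C ↪ Fin m => ¬ Disjoint (univ.map t) (univ.map t')), card_product, card_univ,
    Fintype.card_perm, Fintype.card_fin, fOrd_eq_descFactorial, fOrd_eq_descFactorial,
    Nat.cast_mul]
  gcongr
  rw [le_sub_iff_add_le]
  exact_mod_cast h

variable (ν : Measure (Fin C × Fin C)) [IsProbabilityMeasure ν]

lemma integral_tupleIndicator (p : Equiv.Perm (Fin C)) {t : Fin C → Fin m} (ht : t.Injective) :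
    ∫ ω, tupleIndicator p t ω ∂(Measure.pi fun _ => ν) = ∏ c, ν.real {(p c, c)} :=
  integral_prod_ite_eval_pi ht _

lemma covariance_tupleIndicator_eq_zero (p p' : Equiv.Perm (Fin C)) {t t' : Fin C ↪ Fin m}
    (h : Disjoint (univ.map t) (univ.map t')) :
    cov[tupleIndicator p t, tupleIndicator p' t'; Measure.pi fun _ => ν] = 0 := by
  have hindep : IndepFun (tupleIndicator p t) (tupleIndicator p' t') (Measure.pi fun _ => ν) :=
    indepFun_comp_restrict_pi h
      (F := fun y => ∏ c, if y ⟨t c, mem_map_of_mem t (mem_univ c)⟩ = (p c, c) then 1 else 0)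
      (G := fun y => ∏ c, if y ⟨t' c, mem_map_of_mem t' (mem_univ c)⟩ = (p' c, c) then 1 else 0)
      .of_discrete .of_discrete
  exact hindep.covariance_eq_zero .of_discrete .of_discrete

lemma variance_det_countMatrix_le :
    Var[fun ω => (countMatrix ω).det; Measure.pi fun _ : Fin m => ν]
      ≤ ∑ i : Equiv.Perm (Fin C) × (Fin C ↪ Fin m),
          (#{j : Equiv.Perm (Fin C) × (Fin C ↪ Fin m) |
              ¬ Disjoint (univ.map i.2) (univ.map j.2)} : ℝ)
            * ∫ ω, tupleIndicator i.1 i.2 ω ∂(Measure.pi fun _ => ν) := by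
  have hsign (p : Equiv.Perm (Fin C)) : |((Equiv.Perm.sign p : ℤ) : ℝ)| ≤ 1 := by
    rcases Int.units_eq_one_or (Equiv.Perm.sign p) with h | h <;> simp [h]
  have h := variance_sum_le_of_covariance_eq_zero (μ := Measure.pi fun _ => ν)
    (X := fun i : Equiv.Perm (Fin C) × (Fin C ↪ Fin m) => tupleIndicator i.1 i.2)
    (a := fun i => ((Equiv.Perm.sign i.1 : ℤ) : ℝ)) (fun _ => .of_discrete)
    (fun i => tupleIndicator_mem_Icc i.1 i.2) (fun i => hsign i.1)
    (fun i j => ¬ Disjoint (univ.map i.2) (univ.map j.2))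
    fun i j h => covariance_tupleIndicator_eq_zero ν i.1 j.1 (t := i.2) (t' := j.2) (not_not.1 h)
  simp_rw [det_countMatrix]
  exact h

end CountMatrix

theorem variance_det_count_matrix_le_general (C m : ℕ)
    (ν : Measure (Fin C × Fin C)) [IsProbabilityMeasure ν] :
    variance (fun ω : Fin m → Fin C × Fin C =>
        (Matrix.of fun c c' : Fin C =>
          ∑ t : Fin m, if ω t = (c, c') then (1 : ℝ) else 0).det)
      (Measure.pi fun _ : Fin m => ν)
      ≤ fOrd m C * permanent (Matrix.of fun c c' : Fin C => (ν {(c, c')}).toReal) +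
        (Nat.factorial C : ℝ) * fOrd m C * (fOrd m C - fOrd (m - C) C) *
          permanent (Matrix.of fun c c' : Fin C => (ν {(c, c')}).toReal) := by
  set U := Matrix.of fun c c' : Fin C => (ν {(c, c')}).toReal
  set D := fOrd m C - fOrd (m - C) C
  have hper : ∑ p : Equiv.Perm (Fin C), ∏ c, ν.real {(p c, c)} = permanent U :=
    (permanent_eq_matrix_permanent U).symm
  have hper_nonneg : 0 ≤ permanent U :=
    hper ▸ sum_nonneg fun p _ => prod_nonneg fun c _ => measureReal_nonneg
  calc Var[fun ω => (countMatrix ω).det; Measure.pi fun _ => ν]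
      ≤ _ := variance_det_countMatrix_le ν
    _ ≤ ∑ i : Equiv.Perm (Fin C) × (Fin C ↪ Fin m),
          C.factorial * D * ∏ c, ν.real {(i.1 c, c)} := by
        refine sum_le_sum fun i _ => ?_
        rw [integral_tupleIndicator ν i.1 i.2.injective]
        exact mul_le_mul_of_nonneg_right (card_overlapping_pairs_le i.2)
          (prod_nonneg fun c _ => measureReal_nonneg)
    _ = C.factorial * fOrd m C * D * permanent U := by
        rw [Fintype.sum_prod_type, ← hper, mul_sum]
        refine sum_congr rfl fun p _ => ?_
        dsimp only
        rw [sum_const, card_univ, Fintype.card_embedding_eq, nsmul_eq_mul, fOrd_eq_descFactorial]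
        simp only [Fintype.card_fin]
        ring
    _ ≤ _ := le_add_of_nonneg_left (mul_nonneg (by rw [fOrd]; positivity) hper_nonneg)

/-- variance bound for the count-matrix determinant: with `m ≥ C` i.i.d.
tasks with per-task joint distribution `ν` (joint distribution matrix `U`), the count
matrix `M(c,c') = Σ_t 1[sample t = (c,c')]` satisfies
`Var[det M] ≤ f(m,C)·per(U) + C!·f(m,C)·(f(m,C) − f(m−C,C))·per(U)`. -/
theorem variance_det_count_matrix_le (C m : ℕ) (hm : C ≤ m)
    (ν : Measure (Fin C × Fin C)) [IsProbabilityMeasure ν] :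
    variance (fun ω : Fin m → Fin C × Fin C =>
        (Matrix.of fun c c' : Fin C =>
          ∑ t : Fin m, if ω t = (c, c') then (1 : ℝ) else 0).det)
      (Measure.pi fun _ : Fin m => ν)
      ≤ fOrd m C * permanent (Matrix.of fun c c' : Fin C => (ν {(c, c')}).toReal) +
        (Nat.factorial C : ℝ) * fOrd m C * (fOrd m C - fOrd (m - C) C) *
          permanent (Matrix.of fun c c' : Fin C => (ν {(c, c')}).toReal) :=
  variance_det_count_matrix_le_general C m ν
end
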